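/- For every prime p with p ≠ 2, p ≠ 3 and p ≠ 5, the projective special linear group PSL(2, 𝔽_p) admits an unmixed Beauville structure. -/

import Mathlib

/-- `Σ(a,c)`: the set of all conjugates of all powers of `a`, `c` and `ac`. -/
def beauvilleSigma {G : Type*} [Group G] (a c : G) : Set G :=
  ⋃ g : G, ⋃ i : ℕ, {g * a ^ i * g⁻¹, g * c ^ i * g⁻¹, g * (a * c) ^ i * g⁻¹}

/-- An unmixed Beauville structure on `G`: two generating pairs whose associated
sets `Σ` intersect trivially. -/
def IsUnmixedBeauvilleStructure {G : Type*} [Group G] (a₁ c₁ a₂ c₂ : G) : Prop :=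
  Subgroup.closure {a₁, c₁} = ⊤ ∧ Subgroup.closure {a₂, c₂} = ⊤ ∧
    beauvilleSigma a₁ c₁ ∩ beauvilleSigma a₂ c₂ = {1}

/-!
Take `a₁ = [[1,-4],[0,1]]`, `c₁ = [[1,0],[1,1]]` and `a₂ = [[2,1],[1,1]]`, `c₂ = [[0,-1],[1,1]]`.
The matrices `a₁`, `c₁` are unipotent and `a₁c₁` has trace `-2`, so it is `-1` times a unipotent
matrix: all three have order `p` in `PSL(2, 𝔽_p)`. The matrices `a₂`, `c₂`, `a₂c₂` have traces
`3, 1, 1`, hence discriminants `5, -3, -3`, which are nonzero for `p ∉ {2, 3, 5}`. Over `𝔽_q`, a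
matrix `M` with nonzero discriminant satisfies `M^q = M` or `M^q = adj M`, because `M^q` is a
polynomial in `M` with the same characteristic polynomial; so these three elements have order
dividing `p² - 1`. Since `p` and `p² - 1` are coprime, `Σ(a₁,c₁) ∩ Σ(a₂,c₂) = {1}`. Each pair
generates, as its span contains a nontrivial upper and a nontrivial lower transvection.
-/

open Matrix
open scoped MatrixGroups

section Beauville

variable {G : Type*} [Group G]

lemma one_mem_beauvilleSigma (a c : G) : 1 ∈ beauvilleSigma a c :=
  Set.mem_iUnion.2 ⟨1, Set.mem_iUnion.2 ⟨0, by simp⟩⟩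

lemma pow_eq_one_of_mem_beauvilleSigma {a c x : G} {m : ℕ} (ha : a ^ m = 1) (hc : c ^ m = 1)
    (hac : (a * c) ^ m = 1) (hx : x ∈ beauvilleSigma a c) : x ^ m = 1 := by
  have conj_pow_eq_one {b : G} (hb : b ^ m = 1) (g : G) (i : ℕ) : (g * b ^ i * g⁻¹) ^ m = 1 := by
    rw [conj_pow, ← pow_mul, pow_mul', hb, one_pow, mul_one, mul_inv_cancel]
  simp only [beauvilleSigma, Set.mem_iUnion, Set.mem_insert_iff, Set.mem_singleton_iff] at hx
  obtain ⟨g, i, rfl | rfl | rfl⟩ := hx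
  exacts [conj_pow_eq_one ha g i, conj_pow_eq_one hc g i, conj_pow_eq_one hac g i]

lemma isUnmixedBeauvilleStructure_of_coprime {a₁ c₁ a₂ c₂ : G} {m n : ℕ}
    (h₁ : Subgroup.closure {a₁, c₁} = ⊤) (h₂ : Subgroup.closure {a₂, c₂} = ⊤)
    (hmn : m.Coprime n) (ha₁ : a₁ ^ m = 1) (hc₁ : c₁ ^ m = 1) (hac₁ : (a₁ * c₁) ^ m = 1)
    (ha₂ : a₂ ^ n = 1) (hc₂ : c₂ ^ n = 1) (hac₂ : (a₂ * c₂) ^ n = 1) :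
    IsUnmixedBeauvilleStructure a₁ c₁ a₂ c₂ := by
  refine ⟨h₁, h₂, Set.eq_singleton_iff_unique_mem.2
    ⟨⟨one_mem_beauvilleSigma _ _, one_mem_beauvilleSigma _ _⟩, fun x ⟨hx₁, hx₂⟩ => ?_⟩⟩
  have hm := orderOf_dvd_of_pow_eq_one (pow_eq_one_of_mem_beauvilleSigma ha₁ hc₁ hac₁ hx₁)
  have hn := orderOf_dvd_of_pow_eq_one (pow_eq_one_of_mem_beauvilleSigma ha₂ hc₂ hac₂ hx₂)
  exact orderOf_eq_one_iff.1 (Nat.eq_one_of_dvd_coprimes hmn hm hn)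

lemma Subgroup.closure_pair_map_eq_top {H : Type*} [Group H] {f : G →* H}
    (hf : Function.Surjective f) {a c : G} (h : Subgroup.closure {a, c} = ⊤) :
    Subgroup.closure {f a, f c} = ⊤ := by
  rw [← Set.image_pair, ← MonoidHom.map_closure, h, Subgroup.map_top_of_surjective f hf]

lemma isUnmixedBeauvilleStructure_quotient_of_coprime {N : Subgroup G} [N.Normal]
    {a₁ c₁ a₂ c₂ : G} {m n : ℕ}
    (h₁ : Subgroup.closure {a₁, c₁} = ⊤) (h₂ : Subgroup.closure {a₂, c₂} = ⊤)
    (hmn : m.Coprime n) (ha₁ : a₁ ^ m ∈ N) (hc₁ : c₁ ^ m ∈ N) (hac₁ : (a₁ * c₁) ^ m ∈ N)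
    (ha₂ : a₂ ^ n ∈ N) (hc₂ : c₂ ^ n ∈ N) (hac₂ : (a₂ * c₂) ^ n ∈ N) :
    IsUnmixedBeauvilleStructure (a₁ : G ⧸ N) (c₁ : G ⧸ N) (a₂ : G ⧸ N) (c₂ : G ⧸ N) := by
  simp only [← QuotientGroup.eq_one_iff, QuotientGroup.mk_pow, QuotientGroup.mk_mul]
    at ha₁ hc₁ hac₁ ha₂ hc₂ hac₂
  exact isUnmixedBeauvilleStructure_of_coprime
    (Subgroup.closure_pair_map_eq_top (QuotientGroup.mk'_surjective N) h₁)
    (Subgroup.closure_pair_map_eq_top (QuotientGroup.mk'_surjective N) h₂)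
    hmn ha₁ hc₁ hac₁ ha₂ hc₂ hac₂

end Beauville

lemma Nat.coprime_sq_sub_one_right {p : ℕ} (hp : 0 < p) : p.Coprime (p ^ 2 - 1) :=
  ((Nat.coprime_self_sub_right (Nat.one_le_pow _ _ hp)).2
    (Nat.coprime_one_right _)).coprime_dvd_left (dvd_pow_self p two_ne_zero)

lemma ZMod.natCast_ne_zero_of_prime {p q : ℕ} [Fact p.Prime] (hq : q.Prime) (hpq : p ≠ q) :
    (q : ZMod p) ≠ 0 := by
  rwa [Ne, ZMod.natCast_eq_zero_iff, Nat.prime_dvd_prime_iff_eq Fact.out hq]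

namespace Matrix

section CommRing

variable {R : Type*} [CommRing R] (M : Matrix (Fin 2) (Fin 2) R)

lemma sq_eq_trace_smul_sub_det_smul : M ^ 2 = M.trace • M - M.det • 1 := by
  ext i j
  fin_cases i <;> fin_cases j <;> simp [sq, mul_apply, trace_fin_two, det_fin_two] <;> ring

lemma adjugate_eq_trace_smul_sub : adjugate M = M.trace • 1 - M := by
  ext i j
  fin_cases i <;> fin_cases j <;> simp [adjugate_fin_two, trace_fin_two]

lemma exists_pow_eq_smul_one_add_smul (n : ℕ) : ∃ α β : R, M ^ n = α • 1 + β • M := by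
  induction n with
  | zero => exact ⟨1, 0, by simp⟩
  | succ n ih =>
    obtain ⟨α, β, h⟩ := ih
    refine ⟨-(β * M.det), α + β * M.trace, ?_⟩
    rw [pow_succ, h, add_mul, smul_mul_assoc, smul_mul_assoc, one_mul, ← sq,
      sq_eq_trace_smul_sub_det_smul]
    module

lemma trace_smul_one_add_smul (α β : R) : (α • 1 + β • M).trace = 2 * α + β * M.trace := by
  simp [trace_fin_two]
  ring

lemma discr_smul_one_add_smul (α β : R) : (α • 1 + β • M).discr = β ^ 2 * M.discr := by
  simp [discr_fin_two, trace_fin_two, det_fin_two]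
  ring

end CommRing

variable {K : Type*} [Field K] [NeZero (2 : K)] {M : Matrix (Fin 2) (Fin 2) K}

lemma pow_card_eq_self_or_adjugate [Fintype K] (hM : M.discr ≠ 0) :
    M ^ Fintype.card K = M ∨ M ^ Fintype.card K = adjugate M := by
  obtain ⟨α, β, hαβ⟩ := M.exists_pow_eq_smul_one_add_smul (Fintype.card K)
  have htrace : 2 * α + β * M.trace = M.trace := by
    rw [← trace_smul_one_add_smul, ← hαβ, FiniteField.trace_pow_card, FiniteField.pow_card]
  have hdiscr : β ^ 2 * M.discr = 1 * M.discr := by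
    rw [← discr_smul_one_add_smul _ α, ← hαβ, one_mul, discr, discr,
      FiniteField.Matrix.charpoly_pow_card]
  rw [adjugate_eq_trace_smul_sub, hαβ]
  rcases sq_eq_one_iff.1 (mul_right_cancel₀ hM hdiscr) with rfl | rfl
  · left
    have hα : α = 0 := by simpa [two_ne_zero' K] using htrace
    simp [hα]
  · right
    have hα : α = M.trace := mul_left_cancel₀ (two_ne_zero' K) (by linear_combination htrace)
    rw [hα]
    module

lemma pow_char_eq_scalar_of_discr_eq_zero (p : ℕ) [Fact p.Prime] [CharP K p]
    (hM : M.discr = 0) : M ^ p = scalar (Fin 2) ((M.trace / 2) ^ p) := by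
  set N := M - scalar (Fin 2) (M.trace / 2)
  have hN : N ^ 2 = 0 := by simp [N, -scalar_apply, sub_scalar_sq_eq_discr, hM]
  have hcomm : Commute (scalar (Fin 2) (M.trace / 2)) N := scalar_commute _ (Commute.all _) N
  conv_lhs => rw [← add_sub_cancel (scalar (Fin 2) (M.trace / 2)) M]
  rw [add_pow_char_of_commute _ hcomm, pow_eq_zero_of_le (Fact.out : p.Prime).two_le hN,
    add_zero, map_pow]

namespace SpecialLinearGroup

lemma pow_card_sq_sub_one_eq_one [Fintype K] {u : SL(2, K)}
    (hu : (u : Matrix (Fin 2) (Fin 2) K).discr ≠ 0) : u ^ (Fintype.card K ^ 2 - 1) = 1 := by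
  have hu' : u ^ Fintype.card K = u ∨ u ^ Fintype.card K = u⁻¹ := by
    have h := pow_card_eq_self_or_adjugate hu
    rw [← coe_pow, ← coe_inv] at h
    exact h.imp Subtype.ext Subtype.ext
  have h : u ^ (Fintype.card K ^ 2) = u := by
    rcases hu' with h | h <;> rw [sq, pow_mul, h]
    · exact h
    · rw [inv_pow, h, inv_inv]
  rw [← mul_left_inj u, pow_sub_one_mul (by positivity), h, one_mul]

lemma pow_char_mem_center_of_discr_eq_zero (p : ℕ) [Fact p.Prime] [CharP K p] {u : SL(2, K)}
    (hu : (u : Matrix (Fin 2) (Fin 2) K).discr = 0) : u ^ p ∈ Subgroup.center SL(2, K) := by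
  have hpow := pow_char_eq_scalar_of_discr_eq_zero p hu
  refine mem_center_iff.2 ⟨_, ?_, hpow.symm.trans (coe_pow u p).symm⟩
  have hdet := (u ^ p).det_coe
  rw [coe_pow, hpow] at hdet
  simpa using hdet

section Transvection

variable {ι R : Type*} [Fintype ι] [DecidableEq ι] [CommRing R] {i j : ι} (hij : i ≠ j)

lemma transvection_nsmul (b : R) (n : ℕ) :
    transvection hij (n • b) = transvection hij b ^ n := by
  induction n with
  | zero => simp
  | succ n ih => rw [succ_nsmul, transvection_add, ih, pow_succ]

lemma transvection_pow_char (p : ℕ) [CharP R p] (b : R) : transvection hij b ^ p = 1 := by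
  rw [← transvection_nsmul, nsmul_eq_mul, CharP.cast_eq_zero, zero_mul, transvection_coeff_zero]

end Transvection

end SpecialLinearGroup

end Matrix

-- `𝐔 a = [[1, a], [0, 1]]` and `𝐋 b = [[1, 0], [b, 1]]`.
local notation "𝐔" => Matrix.SpecialLinearGroup.transvection (zero_ne_one' (Fin 2))
local notation "𝐋" => Matrix.SpecialLinearGroup.transvection (one_ne_zero' (Fin 2))

namespace Matrix.SpecialLinearGroup

section CommRing

variable {R : Type*} [CommRing R]

lemma discr_coe_eq_trace_sq_sub_four (u : SL(2, R)) :
    (u : Matrix (Fin 2) (Fin 2) R).discr = (u : Matrix (Fin 2) (Fin 2) R).trace ^ 2 - 4 := by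
  rw [discr_fin_two, u.det_coe, mul_one]

lemma discr_transvection_mul_transvection (a b : R) :
    ((𝐔 a * 𝐋 b : SL(2, R)) : Matrix (Fin 2) (Fin 2) R).discr = a * b * (a * b + 4) := by
  rw [discr_coe_eq_trace_sq_sub_four]
  simp [transvection_coe, trace_fin_two, mul_apply, Fin.sum_univ_two]
  ring

lemma discr_transvection_products :
    ((𝐔 1 * 𝐋 1 * (𝐔 (-1) * 𝐋 1) : SL(2, R)) : Matrix (Fin 2) (Fin 2) R).discr = -3 := by
  rw [discr_coe_eq_trace_sq_sub_four]
  simp [transvection_coe, trace_fin_two, mul_apply, Fin.sum_univ_two]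
  ring

end CommRing

variable {p : ℕ} [Fact p.Prime]

lemma transvection_mem_of_ne_zero {ι : Type*} [Fintype ι] [DecidableEq ι] {i j : ι}
    {hij : i ≠ j} {H : Subgroup (SpecialLinearGroup ι (ZMod p))} {a : ZMod p} (ha : a ≠ 0)
    (h : transvection hij a ∈ H) (b : ZMod p) : transvection hij b ∈ H := by
  have : transvection hij b = transvection hij a ^ (b / a).val := by
    rw [← transvection_nsmul, nsmul_eq_mul, ZMod.natCast_zmod_val, div_mul_cancel₀ b ha]
  exact this ▸ pow_mem h _

namespace SL2

lemma eq_top_of_transvection_mem {H : Subgroup SL(2, ZMod p)} {a b : ZMod p} (ha : a ≠ 0)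
    (hb : b ≠ 0) (hU : 𝐔 a ∈ H) (hL : 𝐋 b ∈ H) : H = ⊤ := by
  refine eq_top_iff.2 fun A _ => SL2.transvection_induction (· ∈ H) (fun i j hij c => ?_)
    (fun _ _ => mul_mem) A
  fin_cases i <;> fin_cases j
  exacts [absurd rfl hij, transvection_mem_of_ne_zero ha hU c,
    transvection_mem_of_ne_zero hb hL c, absurd rfl hij]

lemma closure_transvection_pair_eq_top {a b : ZMod p} (ha : a ≠ 0) (hb : b ≠ 0) :
    Subgroup.closure {𝐔 a, 𝐋 b} = (⊤ : Subgroup SL(2, ZMod p)) :=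
  eq_top_of_transvection_mem ha hb (Subgroup.subset_closure (by simp))
    (Subgroup.subset_closure (by simp))

lemma closure_transvection_products_eq_top (h2 : (2 : ZMod p) ≠ 0) :
    Subgroup.closure {𝐔 1 * 𝐋 1, 𝐔 (-1) * 𝐋 1} = (⊤ : Subgroup SL(2, ZMod p)) := by
  set H : Subgroup SL(2, ZMod p) := Subgroup.closure {𝐔 1 * 𝐋 1, 𝐔 (-1) * 𝐋 1}
  have hU : 𝐔 2 ∈ H := by
    have : (𝐔 2 : SL(2, ZMod p)) = 𝐔 1 * 𝐋 1 * (𝐔 (-1) * 𝐋 1)⁻¹ := by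
      rw [_root_.mul_inv_rev, transvection_inv, transvection_inv, neg_neg, mul_assoc,
        ← mul_assoc (𝐋 1), ← transvection_add, add_neg_cancel, transvection_coeff_zero, one_mul,
        ← transvection_add, one_add_one_eq_two]
    rw [this]
    exact mul_mem (Subgroup.subset_closure (by simp)) (inv_mem (Subgroup.subset_closure (by simp)))
  have hL : 𝐋 1 ∈ H := by
    rw [← inv_mul_cancel_left (𝐔 1) (𝐋 1)]
    exact mul_mem (inv_mem (transvection_mem_of_ne_zero h2 hU 1))
      (Subgroup.subset_closure (by simp))
  exact eq_top_of_transvection_mem h2 one_ne_zero hU hL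

end SL2

end Matrix.SpecialLinearGroup

open Matrix.SpecialLinearGroup

/-- For every prime `p ∉ {2, 3, 5}` the group `PSL(2, 𝔽_p)` (the quotient of
`SL(2, 𝔽_p)` by its center) admits an unmixed Beauville structure. -/
theorem PSL2_unmixedBeauville (p : ℕ) (hp : p.Prime) (h2 : p ≠ 2) (h3 : p ≠ 3)
    (h5 : p ≠ 5) :
    ∃ a₁ c₁ a₂ c₂ :
        Matrix.SpecialLinearGroup (Fin 2) (ZMod p) ⧸
          Subgroup.center (Matrix.SpecialLinearGroup (Fin 2) (ZMod p)),
      IsUnmixedBeauvilleStructure a₁ c₁ a₂ c₂ := by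
  have := Fact.mk hp
  have two : (2 : ZMod p) ≠ 0 := by exact_mod_cast ZMod.natCast_ne_zero_of_prime Nat.prime_two h2
  have three : (3 : ZMod p) ≠ 0 := by
    exact_mod_cast ZMod.natCast_ne_zero_of_prime Nat.prime_three h3
  have five : (5 : ZMod p) ≠ 0 := by
    exact_mod_cast ZMod.natCast_ne_zero_of_prime Nat.prime_five h5
  have : NeZero (2 : ZMod p) := ⟨two⟩
  have semisimple {u : SL(2, ZMod p)} (hu : (u : Matrix (Fin 2) (Fin 2) (ZMod p)).discr ≠ 0) :
      u ^ (p ^ 2 - 1) ∈ Subgroup.center SL(2, ZMod p) := by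
    have h := pow_card_sq_sub_one_eq_one hu
    rw [ZMod.card] at h
    exact h ▸ one_mem _
  refine ⟨_, _, _, _, isUnmixedBeauvilleStructure_quotient_of_coprime
    (a₁ := 𝐔 (-4)) (c₁ := 𝐋 1) (a₂ := 𝐔 1 * 𝐋 1) (c₂ := 𝐔 (-1) * 𝐋 1)
    (SL2.closure_transvection_pair_eq_top
      (neg_ne_zero.2 (by simpa [← two_add_two_eq_four, ← two_mul] using two)) one_ne_zero)
    (SL2.closure_transvection_products_eq_top two)
    (Nat.coprime_sq_sub_one_right hp.pos) ?_ ?_ ?_ ?_ ?_ ?_⟩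
  · rw [transvection_pow_char _ p]; exact one_mem _
  · rw [transvection_pow_char _ p]; exact one_mem _
  · exact pow_char_mem_center_of_discr_eq_zero p (by rw [discr_transvection_mul_transvection]; ring)
  · exact semisimple (by rw [discr_transvection_mul_transvection]; norm_num [five])
  · exact semisimple (by rw [discr_transvection_mul_transvection]; norm_num [three])
  · exact semisimple (by rw [discr_transvection_products]; exact neg_ne_zero.2 three)
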